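/- arXiv:0907.0942 — 2 statements merged into one kernel-verified Lean document; each statement's English description precedes it below -/
import Mathlib

section
/- Let L be a regular language over a finite alphabet Σ. The following assertions are equivalent: (1) the adherence adh(L) is uncountable; (2) L is exponential; (3) pref(L) is exponential. -/
/-!
Call a state of a DFA useful if some prefix of an accepted word leads to it. Either some useful
state `q` carries two distinct cycles `x ≠ y` of the same length, or at every useful state a cycle
is determined by its length.

In the first case, with `u` leading to `q`, the words `u z₁ ⋯ z_N` (`zᵢ ∈ {x, y}`) are `2^N`
distinct prefixes of length `|u| + N|x|`, and the infinite products `u z₁ z₂ ⋯` embed `2^ℕ` into the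
adherence. Since a prefix extends to an accepted word by fewer than `|Q|` letters (pumping), `L`
is then exponential as well.

In the second case a prefix `v` of length `n` is determined by the last position `j` at which its
run visits each state `p`, together with the letter read there: if the run is at `p` at position
`i ≤ j`, then `v` reads a cycle of length `j - i` at `p`, which is unique. This bounds the number
of such prefixes by `((n+1)(|Σ|+1))^|Q|`. Likewise every word of the adherence is eventually
periodic: between visits of a state that is visited infinitely often it reads cycles.
-/

/-- The prefix of length `ℓ` of an infinite word `w : ℕ → A`. -/
def prefixOf {A : Type*} (w : ℕ → A) (ℓ : ℕ) : List A := List.ofFn (fun i : Fin ℓ => w i)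

/-- The set of prefixes of words of a language `L`. -/
def pref {A : Type*} (L : Set (List A)) : Set (List A) := {u | ∃ v ∈ L, u <+: v}

/-- The adherence of a language. -/
def adh {A : Type*} (L : Set (List A)) : Set (ℕ → A) :=
  {w | ∀ ℓ : ℕ, prefixOf w ℓ ∈ pref L}

/-- Transition function of a deterministic automaton extended to words. -/
def deltaStar {Q A : Type*} (δ : Q → A → Q) (q : Q) (w : List A) : Q := w.foldl δ q

/-- A language `M` is exponential if the number of its words of length `n`
is at least `c·θⁿ` for some `θ > 1`, `c > 0` and infinitely many `n`. -/
def Exponential {A : Type*} (M : Set (List A)) : Prop :=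
  ∃ θ : ℝ, 1 < θ ∧ ∃ c : ℝ, 0 < c ∧
    ∀ N : ℕ, ∃ n : ℕ, N ≤ n ∧ c * θ ^ n ≤ ({w ∈ M | w.length = n}.ncard : ℝ)

open Filter Topology

section Words

variable {α : Type*}

theorem length_prefixOf (w : ℕ → α) (ℓ : ℕ) : (prefixOf w ℓ).length = ℓ :=
  List.length_ofFn

theorem getElem?_prefixOf (w : ℕ → α) {ℓ t : ℕ} (ht : t < ℓ) :
    (prefixOf w ℓ)[t]? = some (w t) := by
  simp [prefixOf, ht]

theorem prefixOf_add (w : ℕ → α) (a b : ℕ) :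
    prefixOf w (a + b) = prefixOf w a ++ prefixOf (fun k => w (a + k)) b := by
  simp only [prefixOf, List.ofFn_add]
  rfl

theorem prefixOf_prefix_of_le (w : ℕ → α) {ℓ ℓ' : ℕ} (h : ℓ ≤ ℓ') :
    prefixOf w ℓ <+: prefixOf w ℓ' := by
  obtain ⟨k, rfl⟩ := Nat.exists_eq_add_of_le h
  rw [prefixOf_add]
  exact List.prefix_append _ _

theorem subset_pref (L : Set (List α)) : L ⊆ pref L :=
  fun w hw => ⟨w, hw, List.prefix_rfl⟩

theorem mem_pref_of_prefix {L : Set (List α)} {u v : List α} (h : u <+: v) (hv : v ∈ pref L) :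
    u ∈ pref L :=
  let ⟨t, ht, hvt⟩ := hv
  ⟨t, ht, h.trans hvt⟩

theorem mem_adh_of_frequently {L : Set (List α)} {w : ℕ → α}
    (h : ∃ᶠ ℓ in atTop, prefixOf w ℓ ∈ pref L) : w ∈ adh L := fun ℓ =>
  let ⟨_, hℓ', hw⟩ := frequently_atTop.1 h ℓ
  mem_pref_of_prefix (prefixOf_prefix_of_le w hℓ') hw

theorem finite_slice [Finite α] (M : Set (List α)) (n : ℕ) : {w ∈ M | w.length = n}.Finite :=
  (List.finite_length_eq α n).subset fun _ hw => hw.2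

theorem countable_setOf_eventually_periodic [Finite α] :
    {w : ℕ → α | ∃ i a, 0 < a ∧ Function.Periodic (fun k => w (i + k)) a}.Countable := by
  have hunion : {w : ℕ → α | ∃ i a, 0 < a ∧ Function.Periodic (fun k => w (i + k)) a} =
      ⋃ i, ⋃ a, {w | 0 < a ∧ Function.Periodic (fun k => w (i + k)) a} := by
    ext; simp
  rw [hunion]
  refine Set.countable_iUnion fun i => Set.countable_iUnion fun a => Set.Finite.countable ?_
  refine Set.Finite.of_injOn (f := fun w (k : Fin (i + a)) => w k) (Set.mapsTo_univ _ _) ?_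
    Set.finite_univ
  rintro w ⟨ha, hw⟩ w' ⟨-, hw'⟩ h
  funext k
  rcases lt_or_ge k i with hk | hk
  · exact congrFun h ⟨k, by omega⟩
  · obtain ⟨t, rfl⟩ := Nat.exists_eq_add_of_le hk
    have hmod := congrFun h ⟨i + t % a, by have := Nat.mod_lt t ha; omega⟩
    simpa only [hw.map_mod_nat, hw'.map_mod_nat] using hmod

theorem length_pos_of_ne {x y : List α} (hlen : x.length = y.length) (hne : x ≠ y) :
    0 < x.length := by
  refine Nat.pos_of_ne_zero fun h0 => hne ?_
  rw [List.length_eq_zero_iff.1 h0, List.length_eq_zero_iff.1 (hlen.symm.trans h0)]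

def blocks (x y : List α) (bs : List Bool) : List α :=
  bs.flatMap (cond · x y)

theorem blocks_cons (x y : List α) (b : Bool) (bs : List Bool) :
    blocks x y (b :: bs) = cond b x y ++ blocks x y bs :=
  List.flatMap_cons

theorem length_cond {x y : List α} (hlen : x.length = y.length) (b : Bool) :
    (cond b x y).length = x.length := by
  cases b <;> simp [hlen]

theorem length_blocks {x y : List α} (hlen : x.length = y.length) (bs : List Bool) :
    (blocks x y bs).length = bs.length * x.length := by
  induction bs with
  | nil => simp [blocks]
  | cons b bs ih => simp [blocks_cons, ih, length_cond hlen, Nat.succ_mul, Nat.add_comm]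

theorem blocks_injective {x y : List α} (hlen : x.length = y.length) (hne : x ≠ y)
    {bs bs' : List Bool} (h : bs.length = bs'.length) (heq : blocks x y bs = blocks x y bs') :
    bs = bs' := by
  induction bs generalizing bs' with
  | nil => exact (List.eq_nil_of_length_eq_zero h.symm).symm
  | cons b bs ih =>
    obtain _ | ⟨b', bs'⟩ := bs'
    · simp at h
    rw [blocks_cons, blocks_cons] at heq
    obtain ⟨hb, hbs⟩ := List.append_inj heq (by cases b <;> cases b' <;> simp [hlen])
    have hbb' : b = b' := by cases b <;> cases b' <;> simp_all
    rw [hbb', ih (by simpa using h) hbs]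

/-- The infinite word `u z₀ z₁ ⋯` with `zₙ = cond (b n) x y`, assuming `x.length = y.length`;
the letter `d` is a junk default that is never read. -/
def blockWord (d : α) (u x y : List α) (b : ℕ → Bool) (k : ℕ) : α :=
  if k < u.length then u.getD k d
  else (cond (b ((k - u.length) / x.length)) x y).getD ((k - u.length) % x.length) d

theorem prefixOf_blockWord (d : α) (u : List α) {x y : List α} (hlen : x.length = y.length)
    (b : ℕ → Bool) (N : ℕ) :
    prefixOf (blockWord d u x y b) (u.length + N * x.length) =
      u ++ blocks x y (List.ofFn fun i : Fin N => b i) := by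
  induction N with
  | zero =>
    simp only [Nat.zero_mul, Nat.add_zero, List.ofFn_zero, blocks, List.flatMap_nil,
      List.append_nil]
    refine List.ext_getElem (by simp [length_prefixOf]) fun i h1 h2 => ?_
    simp [prefixOf, blockWord]
  | succ N ih =>
    rw [Nat.succ_mul, ← add_assoc, prefixOf_add, ih, List.ofFn_succ', List.concat_eq_append]
    simp only [blocks, List.flatMap_append, List.flatMap_singleton, List.append_assoc]
    congr 2
    refine List.ext_getElem (by simp [length_prefixOf, length_cond hlen]) fun k h1 h2 => ?_
    have hk : k < x.length := by simpa [length_prefixOf] using h1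
    have hu : ¬ u.length + N * x.length + k < u.length := by omega
    have hdiv : (u.length + N * x.length + k - u.length) / x.length = N := by
      rw [add_assoc, Nat.add_sub_cancel_left, add_comm, Nat.add_mul_div_right _ _ (by omega),
        Nat.div_eq_of_lt hk, zero_add]
    have hmod : (u.length + N * x.length + k - u.length) % x.length = k := by
      rw [add_assoc, Nat.add_sub_cancel_left, add_comm, Nat.add_mul_mod_self_right,
        Nat.mod_eq_of_lt hk]
    simp only [prefixOf, blockWord, List.getElem_ofFn, hu, hdiv, hmod, if_false, Fin.val_last]
    rw [List.getD_eq_getElem]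

theorem uncountable_nat_arrow_bool : Uncountable (ℕ → Bool) := by
  rw [← not_countable_iff, ← Cardinal.mk_le_aleph0_iff, Cardinal.mk_arrow]
  simpa using Cardinal.cantor Cardinal.aleph0

end Words

section Growth

variable {α : Type*}

theorem Exponential.mono {M M' : Set (List α)} [Finite α] (h : M ⊆ M') (hM : Exponential M) :
    Exponential M' := by
  obtain ⟨θ, hθ, c, hc, H⟩ := hM
  refine ⟨θ, hθ, c, hc, fun N => ?_⟩
  obtain ⟨n, hn, hle⟩ := H N
  have hsub : {w ∈ M | w.length = n} ⊆ {w ∈ M' | w.length = n} := fun w hw => ⟨h hw.1, hw.2⟩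
  exact ⟨n, hn, hle.trans (by exact_mod_cast Set.ncard_le_ncard hsub (finite_slice M' n))⟩

theorem exponential_of_two_pow_le {M : Set (List α)} {a m : ℕ} (hm : 0 < m)
    (h : ∀ N, 2 ^ N ≤ {w ∈ M | w.length = a + N * m}.ncard) : Exponential M := by
  set θ : ℝ := 2 ^ ((m : ℝ)⁻¹)
  have hθm : θ ^ m = 2 := Real.rpow_inv_natCast_pow (by norm_num) hm.ne'
  have hθ : 1 < θ := Real.one_lt_rpow (by norm_num) (by positivity)
  refine ⟨θ, hθ, (θ ^ a)⁻¹, by positivity, fun N => ?_⟩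
  refine ⟨a + N * m, ?_, ?_⟩
  · nlinarith
  · calc (θ ^ a)⁻¹ * θ ^ (a + N * m) = 2 ^ N := by
          rw [pow_add, mul_comm N m, pow_mul, hθm, inv_mul_cancel_left₀ (by positivity)]
      _ ≤ _ := by exact_mod_cast h N

theorem Exponential.of_card_le_sum {M M' : Set (List α)} {k : ℕ} (hk : 0 < k)
    (h : ∀ n, {w ∈ M | w.length = n}.ncard ≤
      ∑ m ∈ Finset.range k, {w ∈ M' | w.length = n + m}.ncard)
    (hM : Exponential M) : Exponential M' := by
  obtain ⟨θ, hθ, c, hc, H⟩ := hM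
  have hθ0 : 0 < θ := one_pos.trans hθ
  refine ⟨θ, hθ, c / (k * θ ^ k), by positivity, fun N => ?_⟩
  obtain ⟨n, hn, hle⟩ := H N
  have hsum : ∑ _m ∈ Finset.range k, c * θ ^ n / k ≤
      ∑ m ∈ Finset.range k, ({w ∈ M' | w.length = n + m}.ncard : ℝ) := by
    rw [Finset.sum_const, Finset.card_range, nsmul_eq_mul, mul_div_cancel₀ _ (by positivity)]
    exact_mod_cast hle.trans (by exact_mod_cast h n)
  obtain ⟨m, hm, hle'⟩ := Finset.exists_le_of_sum_le (Finset.nonempty_range_iff.2 hk.ne') hsum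
  refine ⟨n + m, by omega, le_trans ?_ hle'⟩
  calc c / (k * θ ^ k) * θ ^ (n + m) ≤ c / (k * θ ^ k) * θ ^ (n + k) := by
        gcongr
        · exact hθ.le
        · exact (Finset.mem_range.1 hm).le
    _ = c * θ ^ n / k := by
        field_simp
        ring

theorem not_exponential_of_card_le_pow {M : Set (List α)} (K E : ℕ)
    (h : ∀ n, {w ∈ M | w.length = n}.ncard ≤ ((n + 1) * K) ^ E) : ¬ Exponential M := by
  rintro ⟨θ, hθ, c, hc, H⟩
  have hθ0 : 0 < θ := one_pos.trans hθ
  have hlim : Tendsto (fun n : ℕ => (((n + 1) * K : ℕ) : ℝ) ^ E / θ ^ n) atTop (𝓝 0) := by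
    have := ((tendsto_pow_const_div_const_pow_of_one_lt E hθ).comp
      (tendsto_add_atTop_nat 1)).const_mul ((K : ℝ) ^ E * θ)
    rw [mul_zero] at this
    refine this.congr fun n => ?_
    simp only [Function.comp_apply]
    push_cast
    rw [pow_succ]
    field_simp
    rw [← mul_pow]
    ring
  obtain ⟨N, hN⟩ := eventually_atTop.1 (hlim.eventually_lt_const hc)
  obtain ⟨n, hn, hle⟩ := H N
  have hlt := hN n hn
  rw [div_lt_iff₀ (by positivity)] at hlt
  have hcard : ({w ∈ M | w.length = n}.ncard : ℝ) ≤ (((n + 1) * K : ℕ) : ℝ) ^ E := by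
    exact_mod_cast h n
  linarith

theorem ncard_slice_le_sum_of_extension [Finite α] {M M' : Set (List α)} {k : ℕ}
    (h : ∀ u ∈ M, ∃ s : List α, s.length < k ∧ u ++ s ∈ M') (n : ℕ) :
    {w ∈ M | w.length = n}.ncard ≤ ∑ m ∈ Finset.range k, {w ∈ M' | w.length = n + m}.ncard := by
  choose! ext hext using h
  calc {w ∈ M | w.length = n}.ncard
      ≤ (⋃ m ∈ Finset.range k, {w ∈ M' | w.length = n + m}).ncard := by
        refine Set.ncard_le_ncard_of_injOn (fun u => u ++ ext u) ?_ ?_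
          ((Finset.range k).finite_toSet.biUnion fun m _ => finite_slice M' (n + m))
        · rintro u ⟨hu, rfl⟩
          simp only [Set.mem_iUnion, Finset.mem_range]
          exact ⟨(ext u).length, (hext u hu).1, (hext u hu).2, by simp⟩
        · rintro u ⟨-, hu⟩ u' ⟨-, hu'⟩ huu'
          exact List.append_inj_left huu' (hu.trans hu'.symm)
    _ ≤ ∑ m ∈ Finset.range k, {w ∈ M' | w.length = n + m}.ncard :=
        Finset.set_ncard_biUnion_le _ _

end Growth

namespace DFA

variable {α σ : Type*} (M : DFA α σ)

theorem eval_append (u v : List α) : M.eval (u ++ v) = M.evalFrom (M.eval u) v :=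
  M.evalFrom_of_append _ _ _

theorem mem_pref_accepts_of_eval_eq {u v : List α} (h : M.eval u = M.eval v)
    (hu : u ∈ pref M.accepts) : v ∈ pref M.accepts := by
  obtain ⟨_, hw, s, rfl⟩ := hu
  refine ⟨v ++ s, ?_, List.prefix_append v s⟩
  change M.eval (v ++ s) ∈ M.accept
  rwa [eval_append, ← h, ← eval_append]

theorem exists_short_extension [Fintype σ] {u : List α} (hu : u ∈ pref M.accepts) :
    ∃ s : List α, s.length < Fintype.card σ ∧ u ++ s ∈ M.accepts := by
  classical
  have hex : ∃ n, ∃ s : List α, s.length = n ∧ u ++ s ∈ M.accepts := by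
    obtain ⟨_, hw, s, rfl⟩ := hu
    exact ⟨_, s, rfl, hw⟩
  obtain ⟨s, hlen, hs⟩ := Nat.find_spec hex
  refine ⟨s, lt_of_not_ge fun hcard => ?_, hs⟩
  obtain ⟨q, a, b, c, rfl, -, hb, ha, -, hc⟩ :=
    M.evalFrom_split (s := M.eval u) hcard rfl
  -- pumping the loop `b` out gives a shorter extension
  refine Nat.find_min hex (m := (a ++ c).length) ?_ ⟨a ++ c, rfl, ?_⟩
  · rw [← hlen]
    simp only [List.length_append]
    have := List.length_pos_iff.2 hb
    omega
  · change M.eval (u ++ (a ++ c)) ∈ M.accept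
    rwa [eval_append, evalFrom_of_append, ha, hc, ← eval_append]

theorem evalFrom_blocks {q : σ} {x y : List α} (hx : M.evalFrom q x = q)
    (hy : M.evalFrom q y = q) (bs : List Bool) : M.evalFrom q (blocks x y bs) = q := by
  induction bs with
  | nil => rfl
  | cons b bs ih => cases b <;> simp [blocks_cons, evalFrom_of_append, hx, hy, ih]

def HasUniqueCycles : Prop :=
  ∀ u ∈ pref M.accepts, ∀ x y : List α, x.length = y.length →
    M.evalFrom (M.eval u) x = M.eval u → M.evalFrom (M.eval u) y = M.eval u → x = y

theorem exponential_of_exponential_pref [Finite α] [Fintype σ]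
    (h : Exponential (pref M.accepts)) : Exponential M.accepts :=
  have : Nonempty σ := ⟨M.start⟩
  h.of_card_le_sum Fintype.card_pos
    (ncard_slice_le_sum_of_extension fun _ hu => M.exists_short_extension hu)

section Fork

variable {M} {u x y : List α}

theorem append_blocks_mem_pref (hu : u ∈ pref M.accepts)
    (hx : M.evalFrom (M.eval u) x = M.eval u) (hy : M.evalFrom (M.eval u) y = M.eval u)
    (bs : List Bool) : u ++ blocks x y bs ∈ pref M.accepts := by
  refine M.mem_pref_accepts_of_eval_eq ?_ hu
  rw [eval_append, M.evalFrom_blocks hx hy]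

theorem two_pow_le_ncard_pref_slice [Finite α] (hu : u ∈ pref M.accepts)
    (hlen : x.length = y.length) (hx : M.evalFrom (M.eval u) x = M.eval u)
    (hy : M.evalFrom (M.eval u) y = M.eval u) (hne : x ≠ y) (N : ℕ) :
    2 ^ N ≤ {w ∈ pref M.accepts | w.length = u.length + N * x.length}.ncard := by
  calc 2 ^ N = (Set.univ : Set (Fin N → Bool)).ncard := by simp [Set.ncard_univ]
    _ ≤ _ := by
      refine Set.ncard_le_ncard_of_injOn (fun bs => u ++ blocks x y (List.ofFn bs))
        (fun bs _ => ⟨append_blocks_mem_pref hu hx hy _, by simp [length_blocks hlen]⟩)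
        (fun bs _ bs' _ h => ?_) (finite_slice _ _)
      exact List.ofFn_injective (blocks_injective hlen hne (by simp) (List.append_cancel_left h))

theorem not_countable_adh_of_cycles (hu : u ∈ pref M.accepts) (hlen : x.length = y.length)
    (hx : M.evalFrom (M.eval u) x = M.eval u) (hy : M.evalFrom (M.eval u) y = M.eval u)
    (hne : x ≠ y) : ¬ (adh M.accepts).Countable := by
  have hx0 := length_pos_of_ne hlen hne
  obtain ⟨d⟩ : Nonempty α := ⟨x[0]⟩
  have hpre := prefixOf_blockWord d u hlen
  have hmem : ∀ b, blockWord d u x y b ∈ adh M.accepts := fun b =>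
    mem_adh_of_frequently <| frequently_atTop.2 fun N =>
      ⟨u.length + N * x.length, by nlinarith,
        by rw [hpre]; exact append_blocks_mem_pref hu hx hy _⟩
  have hinj : Function.Injective (blockWord d u x y) := fun b b' h => funext fun i => by
    have hi := blocks_injective hlen hne (by simp) <| List.append_cancel_left <|
      (hpre b (i + 1)).symm.trans ((congrArg (prefixOf · _) h).trans (hpre b' (i + 1)))
    exact congrFun (List.ofFn_inj.1 hi) (Fin.last i)
  exact fun hc => Set.not_countable_univ_iff.2 uncountable_nat_arrow_bool <|
    Set.MapsTo.countable_of_injOn (fun b _ => hmem b) hinj.injOn hc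

end Fork

theorem exponential_pref_of_not_hasUniqueCycles [Finite α] (hM : ¬ M.HasUniqueCycles) :
    Exponential (pref M.accepts) := by
  simp only [HasUniqueCycles, not_forall] at hM
  obtain ⟨u, hu, x, y, hlen, hx, hy, hne⟩ := hM
  exact exponential_of_two_pow_le (length_pos_of_ne hlen hne)
    (two_pow_le_ncard_pref_slice hu hlen hx hy hne)

theorem not_countable_adh_of_not_hasUniqueCycles (hM : ¬ M.HasUniqueCycles) :
    ¬ (adh M.accepts).Countable := by
  simp only [HasUniqueCycles, not_forall] at hM
  obtain ⟨u, hu, x, y, hlen, hx, hy, hne⟩ := hM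
  exact not_countable_adh_of_cycles hu hlen hx hy hne

section UniqueCycles

variable {M}

theorem eventually_periodic_of_mem_adh [Finite σ] (hM : M.HasUniqueCycles) {w : ℕ → α}
    (hw : w ∈ adh M.accepts) : ∃ i a, 0 < a ∧ Function.Periodic (fun k => w (i + k)) a := by
  obtain ⟨q, hq⟩ := Finite.exists_infinite_fiber fun ℓ => M.eval (prefixOf w ℓ)
  have hvisits : ((fun ℓ => M.eval (prefixOf w ℓ)) ⁻¹' {q}).Infinite := Set.infinite_coe_iff.1 hq
  have hcycle : ∀ {i j}, i ≤ j → M.eval (prefixOf w i) = q → M.eval (prefixOf w j) = q →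
      M.evalFrom q (prefixOf (fun t => w (i + t)) (j - i)) = q := by
    intro i j hij hi hj
    rw [← hi, ← eval_append, ← prefixOf_add, Nat.add_sub_cancel' hij, hj, hi]
  obtain ⟨i, hi : M.eval (prefixOf w i) = q⟩ := hvisits.nonempty
  obtain ⟨j, hj : M.eval (prefixOf w j) = q, hij⟩ := hvisits.exists_gt i
  refine ⟨i, j - i, by omega, fun t => ?_⟩
  obtain ⟨k, hk : M.eval (prefixOf w k) = q, hjk⟩ := hvisits.exists_gt (j + t)
  -- the words read from `i` to `k` and from `j` to `k`, then from `i` to `j`, are cycles at `q`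
  have heq := hM (prefixOf w i) (hw i) (prefixOf (fun s => w (i + s)) (k - i))
    (prefixOf (fun s => w (j + s)) (k - j) ++ prefixOf (fun s => w (i + s)) (j - i))
    (by simp only [length_prefixOf, List.length_append]; omega)
    (by rw [hi]; exact hcycle (by omega) hi hk)
    (by rw [hi, evalFrom_of_append, hcycle (by omega) hj hk, hcycle hij.le hi hj])
  have ht := congrArg (·[t]?) heq
  rw [List.getElem?_append_left (by simp only [length_prefixOf]; omega),
    getElem?_prefixOf _ (by omega), getElem?_prefixOf _ (by omega), Option.some_inj] at ht
  change w (i + (t + (j - i))) = w (i + t)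
  rw [show i + (t + (j - i)) = j + t by omega, ht]

theorem countable_adh [Finite α] [Finite σ] (hM : M.HasUniqueCycles) :
    (adh M.accepts).Countable :=
  countable_setOf_eventually_periodic.mono fun _ hw => eventually_periodic_of_mem_adh hM hw

variable (M) [DecidableEq σ]

def visits (v : List α) (p : σ) : Finset ℕ :=
  (Finset.range (v.length + 1)).filter fun i => M.eval (v.take i) = p

/-- Junk value `0` if the run never visits `p`. -/
def lastVisit (v : List α) (p : σ) : ℕ :=
  (M.visits v p).sup id

def visitCode (v : List α) (p : σ) : ℕ × Option α :=
  (M.lastVisit v p, v[M.lastVisit v p]?)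

theorem lastVisit_le (v : List α) (p : σ) : M.lastVisit v p ≤ v.length :=
  Finset.sup_le fun _ hi => Nat.lt_succ_iff.1 (Finset.mem_range.1 (Finset.mem_filter.1 hi).1)

theorem mem_visits_eval_take {v : List α} {i : ℕ} (hi : i ≤ v.length) :
    i ∈ M.visits v (M.eval (v.take i)) :=
  Finset.mem_filter.2 ⟨Finset.mem_range.2 (Nat.lt_succ_of_le hi), rfl⟩

theorem le_lastVisit {v : List α} {i : ℕ} (hi : i ≤ v.length) :
    i ≤ M.lastVisit v (M.eval (v.take i)) :=
  Finset.le_sup (f := id) (M.mem_visits_eval_take hi)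

theorem eval_take_lastVisit {v : List α} {i : ℕ} (hi : i ≤ v.length) :
    M.eval (v.take (M.lastVisit v (M.eval (v.take i)))) = M.eval (v.take i) := by
  obtain ⟨j, hj, hsup⟩ := Finset.exists_mem_eq_sup _ ⟨i, M.mem_visits_eval_take hi⟩ id
  rw [lastVisit, hsup]
  exact (Finset.mem_filter.1 hj).2

variable {M}

theorem take_eq_of_visitCode_eq (hM : M.HasUniqueCycles) {v v' : List α}
    (hv : v ∈ pref M.accepts) (hlen : v.length = v'.length) (h : M.visitCode v = M.visitCode v')
    {i : ℕ} (hi : i ≤ v.length) : v.take i = v'.take i := by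
  induction i with
  | zero => simp
  | succ i ih =>
    have htake := ih (by omega)
    set p := M.eval (v.take i)
    have hp' : M.eval (v'.take i) = p := by rw [← htake]
    obtain ⟨hj, hletter⟩ := Prod.ext_iff.1 (congrFun h p)
    simp only [visitCode] at hj hletter
    set j := M.lastVisit v p
    have hij : i ≤ j := M.le_lastVisit (by omega)
    have hjn := M.lastVisit_le v p
    -- both runs are in state `p` at positions `i` and `j`, so both words read a cycle at `p` there
    have hcycle : (v.drop i).take (j - i) = (v'.drop i).take (j - i) := by
      refine hM (v.take i) (mem_pref_of_prefix (List.take_prefix i v) hv) _ _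
        (by simp only [List.length_take, List.length_drop]; omega) ?_ ?_
      · rw [← eval_append, ← List.take_add, Nat.add_sub_cancel' hij]
        exact M.eval_take_lastVisit (by omega)
      · rw [htake, ← eval_append, ← List.take_add, Nat.add_sub_cancel' hij, hj, ← hp']
        exact M.eval_take_lastVisit (by omega)
    have htakej : v.take (j + 1) = v'.take (j + 1) := by
      rw [List.take_add_one, List.take_add_one, hletter, ← Nat.add_sub_cancel' hij,
        List.take_add, List.take_add, htake, hcycle, Nat.add_sub_cancel' hij, hj]
    have := congrArg (List.take (i + 1)) htakej
    rwa [List.take_take, List.take_take, Nat.min_eq_left (by omega)] at this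

theorem ncard_pref_slice_le [Fintype α] [Fintype σ] (hM : M.HasUniqueCycles) (n : ℕ) :
    {w ∈ pref M.accepts | w.length = n}.ncard ≤
      ((n + 1) * (Fintype.card α + 1)) ^ Fintype.card σ := by
  calc {w ∈ pref M.accepts | w.length = n}.ncard
      ≤ (Fintype.piFinset fun _ : σ => Finset.range (n + 1) ×ˢ (Finset.univ : Finset (Option α))
          : Set (σ → ℕ × Option α)).ncard := by
        refine Set.ncard_le_ncard_of_injOn M.visitCode ?_ ?_ (Finset.finite_toSet _)
        · rintro v ⟨-, rfl⟩
          simp [visitCode, lastVisit_le]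
        · rintro v ⟨hv, hvn⟩ v' ⟨-, hvn'⟩ h
          have hlen := hvn.trans hvn'.symm
          have := take_eq_of_visitCode_eq hM hv hlen h le_rfl
          rwa [List.take_length, hlen, List.take_length] at this
    _ = ((n + 1) * (Fintype.card α + 1)) ^ Fintype.card σ := by
        rw [Set.ncard_coe_finset, Fintype.card_piFinset]
        simp

end UniqueCycles

end DFA

theorem stmt_5 {Γ : Type*} [Fintype Γ] (L : Set (List Γ))
    (hreg : ∃ (n : ℕ) (q0 : Fin n) (δ : Fin n → Γ → Fin n) (F : Set (Fin n)),
      L = {w | deltaStar δ q0 w ∈ F}) :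
    (¬ (adh L).Countable ↔ Exponential L) ∧
    (Exponential L ↔ Exponential (pref L)) := by
  obtain ⟨n, q0, δ, F, rfl⟩ := hreg
  let M : DFA Γ (Fin n) := ⟨δ, q0, F⟩
  change (¬ (adh M.accepts).Countable ↔ Exponential M.accepts) ∧
    (Exponential M.accepts ↔ Exponential (pref M.accepts))
  by_cases hM : M.HasUniqueCycles
  · have hadh := DFA.countable_adh hM
    have hpref : ¬ Exponential (pref M.accepts) :=
      not_exponential_of_card_le_pow _ _ (DFA.ncard_pref_slice_le hM)
    have hL : ¬ Exponential M.accepts := fun h => hpref (h.mono (subset_pref _))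
    tauto
  · have hadh := M.not_countable_adh_of_not_hasUniqueCycles hM
    have hpref := M.exponential_pref_of_not_hasUniqueCycles hM
    have hL := M.exponential_of_exponential_pref hpref
    tauto
end

section
/- Let L be a language over a finite alphabet Σ accepted by a deterministic automaton A = (Q, q₀, Σ, δ, F) (the set of states Q may be infinite). If there exist an accessible state q and words u, v with δ(q, u) = q, δ(q, v) = q, uv ≠ vu, some prefix u' of u with δ(q, u') ∈ F and some prefix v' of v with δ(q, v') ∈ F (two distinct cycles based at q, each passing through a final state), then the set L_∞ of infinite words with infinitely many prefixes in L is uncountable and L is exponential. -/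
/-- `Linf L` : infinite words having infinitely many finite prefixes in `L`. -/
def Linf {A : Type*} (L : Set (List A)) : Set (ℕ → A) :=
  {w | {n : ℕ | prefixOf w n ∈ L}.Infinite}

/-!
Fix a word `x` leading from `q₀` to `q`. Since `uv ≠ vu`, the two blocks `u·uv` and `u·vu` are
distinct words of the same length, so a concatenation of blocks determines the sequence of blocks
it is made of. Each block is a loop at `q` that starts with `u`, hence passes through the final
state `δ(q, u')`. Thus every infinite word `x b₀ b₁ b₂ ⋯` lies in `L_∞`, giving an injection of
`ℕ → Bool` into `L_∞`, and the `2ᴺ` words `x b₀ ⋯ b_{N-1} u'` lie in `L` and all have length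
`|x| + |u'| + N·(2|u| + |v|)`.
-/

open Function

section PrefixChain

variable {α : Type*} {p : ℕ → List α}

theorem prefix_of_le_of_forall_prefix_succ (hp : ∀ k, p k <+: p (k + 1)) {k l : ℕ}
    (hkl : k ≤ l) : p k <+: p l := by
  induction l, hkl using Nat.le_induction with
  | base => exact List.prefix_refl _
  | succ l _ ih => exact ih.trans (hp l)

def chainLimit (p : ℕ → List α) (hlen : ∀ n, n < (p (n + 1)).length) (n : ℕ) : α :=
  (p (n + 1))[n]'(hlen n)

theorem prefixOf_chainLimit (hp : ∀ k, p k <+: p (k + 1))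
    (hlen : ∀ n, n < (p (n + 1)).length) {l : List α} {k : ℕ} (hl : l <+: p k) :
    prefixOf (chainLimit p hlen) l.length = l := by
  refine List.ext_getElem (by simp [prefixOf]) fun i _ hil => ?_
  have hik : i < (p k).length := hil.trans_le hl.length_le
  simp only [prefixOf, List.getElem_ofFn, chainLimit]
  rw [hl.getElem hil]
  rcases le_total (i + 1) k with h | h
  · exact (prefix_of_le_of_forall_prefix_succ hp h).getElem _
  · exact ((prefix_of_le_of_forall_prefix_succ hp h).getElem hik).symm

end PrefixChain

section BlockCode

variable {Γ β : Type*} {B : β → List Γ} {m : ℕ}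

theorem length_flatMap_of_length_eq (hm : ∀ b, (B b).length = m) (bs : List β) :
    (bs.flatMap B).length = bs.length * m := by
  induction bs with
  | nil => simp
  | cons b bs ih => simp [List.flatMap_cons, ih, hm, Nat.succ_mul, Nat.add_comm]

theorem flatMap_inj_of_length_eq (hB : Injective B) (hm : ∀ b, (B b).length = m)
    {bs cs : List β} (hlen : bs.length = cs.length) (h : bs.flatMap B = cs.flatMap B) :
    bs = cs := by
  induction bs generalizing cs with
  | nil => exact (List.length_eq_zero_iff.mp hlen.symm).symm
  | cons b bs ih =>
    obtain _ | ⟨c, cs⟩ := cs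
    · simp at hlen
    · simp only [List.flatMap_cons] at h
      obtain ⟨hbc, hrest⟩ := List.append_inj h (by rw [hm, hm])
      rw [hB hbc, ih (by simpa using hlen) hrest]

theorem pos_of_injective_of_length_eq {B : Bool → List Γ} (hB : Injective B)
    (hm : ∀ b, (B b).length = m) : 0 < m := by
  refine Nat.pos_of_ne_zero fun h0 => Bool.false_ne_true (hB ?_)
  rw [List.eq_nil_of_length_eq_zero ((hm false).trans h0),
    List.eq_nil_of_length_eq_zero ((hm true).trans h0)]

end BlockCode

section Automaton

variable {Γ Q β : Type*} (δ : Q → Γ → Q)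

theorem deltaStar_append (q : Q) (a b : List Γ) :
    deltaStar δ q (a ++ b) = deltaStar δ (deltaStar δ q a) b :=
  List.foldl_append

theorem deltaStar_flatMap_of_loop {B : β → List Γ} {q : Q}
    (hloop : ∀ b, deltaStar δ q (B b) = q) (bs : List β) :
    deltaStar δ q (bs.flatMap B) = q := by
  induction bs with
  | nil => rfl
  | cons b bs ih => rw [List.flatMap_cons, deltaStar_append, hloop, ih]

variable {δ} {q0 q : Q} {F : Set Q} {x z : List Γ} {B : β → List Γ}

theorem deltaStar_append_flatMap_append_mem (hx : deltaStar δ q0 x = q)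
    (hloop : ∀ b, deltaStar δ q (B b) = q) (hz : deltaStar δ q z ∈ F) (bs : List β) :
    x ++ bs.flatMap B ++ z ∈ {w | deltaStar δ q0 w ∈ F} := by
  simpa only [Set.mem_ofPred_eq, deltaStar_append, hx, deltaStar_flatMap_of_loop δ hloop]
    using hz

end Automaton

theorem exponential_of_two_pow_le_ncard {Γ : Type*} {M : Set (List Γ)} {a m : ℕ} (hm : 0 < m)
    (hcard : ∀ N : ℕ, 2 ^ N ≤ {w ∈ M | w.length = a + N * m}.ncard) : Exponential M := by
  set θ : ℝ := 2 ^ ((m : ℝ)⁻¹)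
  have hθm : θ ^ m = 2 := Real.rpow_inv_natCast_pow zero_le_two hm.ne'
  have hθ : 1 < θ := Real.one_lt_rpow one_lt_two (by positivity)
  refine ⟨θ, hθ, (θ ^ a)⁻¹, by positivity, fun N => ⟨a + N * m, by nlinarith, ?_⟩⟩
  calc (θ ^ a)⁻¹ * θ ^ (a + N * m) = (2 : ℝ) ^ N := by
        rw [pow_add, inv_mul_cancel_left₀ (by positivity), mul_comm, pow_mul, hθm]
    _ ≤ _ := by exact_mod_cast hcard N

theorem not_countable_nat_bool : ¬ Countable (ℕ → Bool) := by
  rw [← Cardinal.mk_le_aleph0_iff]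
  simpa using Cardinal.aleph0_lt_continuum

section CodeInAutomaton

variable {Γ Q : Type*} {δ : Q → Γ → Q} {q0 q : Q} {F : Set Q} {x z : List Γ}
  {B : Bool → List Γ} {m : ℕ}

theorem exponential_of_loop_code [Finite Γ] (hx : deltaStar δ q0 x = q) (hB : Injective B)
    (hm : ∀ b, (B b).length = m) (hloop : ∀ b, deltaStar δ q (B b) = q)
    (hz : deltaStar δ q z ∈ F) : Exponential {w | deltaStar δ q0 w ∈ F} := by
  refine exponential_of_two_pow_le_ncard (a := x.length + z.length)
    (pos_of_injective_of_length_eq hB hm) fun N => ?_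
  let f : (Fin N → Bool) → List Γ := fun σ => x ++ (List.ofFn σ).flatMap B ++ z
  have hf : Injective f := fun σ τ h => List.ofFn_injective <|
    flatMap_inj_of_length_eq hB hm (by simp)
      (List.append_cancel_left (List.append_cancel_right h))
  have hmem : ∀ σ, f σ ∈ {w ∈ {w | deltaStar δ q0 w ∈ F} |
      w.length = x.length + z.length + N * m} := fun σ =>
    ⟨deltaStar_append_flatMap_append_mem hx hloop hz _, by
      simp [f, length_flatMap_of_length_eq hm]; ring⟩
  calc 2 ^ N = (Set.univ : Set (Fin N → Bool)).ncard := by simp [Set.ncard_univ]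
    _ ≤ _ := Set.ncard_le_ncard_of_injOn f (fun σ _ => hmem σ) hf.injOn
        ((List.finite_length_eq Γ _).subset fun _ h => h.2)

theorem not_countable_Linf_of_loop_code (hx : deltaStar δ q0 x = q) (hB : Injective B)
    (hm : ∀ b, (B b).length = m) (hloop : ∀ b, deltaStar δ q (B b) = q)
    (hzB : ∀ b, z <+: B b) (hz : deltaStar δ q z ∈ F) :
    ¬ (Linf {w | deltaStar δ q0 w ∈ F}).Countable := by
  have hm0 := pos_of_injective_of_length_eq hB hm
  let p (s : ℕ → Bool) (k : ℕ) : List Γ := x ++ ((List.range k).map s).flatMap B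
  have hp_succ (s k) : p s (k + 1) = p s k ++ B (s k) := by
    simp [p, List.range_succ, List.flatMap_append]
  have hp_length (s k) : (p s k).length = x.length + k * m := by
    simp [p, length_flatMap_of_length_eq hm]
  have hchain (s k) : p s k <+: p s (k + 1) := hp_succ s k ▸ List.prefix_append _ _
  have hlen (s n) : n < (p s (n + 1)).length := by rw [hp_length]; nlinarith
  let W (s : ℕ → Bool) : ℕ → Γ := chainLimit (p s) (hlen s)
  have hW_prefix (s k) : prefixOf (W s) (x.length + k * m) = p s k := by
    rw [← hp_length]; exact prefixOf_chainLimit (hchain s) (hlen s) (List.prefix_refl _)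
  have hW_inj : Injective W := fun s t h => funext fun i => by
    have hi := hW_prefix s (i + 1)
    rw [h, hW_prefix t, hp_succ, hp_succ] at hi
    have hblocks := List.append_inj hi (by rw [hp_length, hp_length])
    exact hB hblocks.2.symm
  have hW_mem (s) : W s ∈ Linf {w | deltaStar δ q0 w ∈ F} := by
    refine Set.infinite_of_injective_forall_mem (f := fun k => x.length + k * m + z.length)
      (fun k l hkl => by simpa [hm0.ne'] using hkl) fun k => ?_
    have hpre : p s k ++ z <+: p s (k + 1) :=
      hp_succ s k ▸ (List.prefix_append_right_inj _).mpr (hzB (s k))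
    have := prefixOf_chainLimit (hchain s) (hlen s) hpre
    simp only [List.length_append, hp_length] at this
    change prefixOf (W s) _ ∈ {w | deltaStar δ q0 w ∈ F}
    rw [show prefixOf (W s) _ = p s k ++ z from this]
    exact deltaStar_append_flatMap_append_mem hx hloop hz _
  intro hc
  exact not_countable_nat_bool <| Set.countable_univ_iff.mp <|
    Set.MapsTo.countable_of_injOn (fun s _ => hW_mem s) hW_inj.injOn hc

end CodeInAutomaton

section TwoLoops

variable {Γ : Type*} {u v : List Γ}

def twoLoopBlock (u v : List Γ) (b : Bool) : List Γ := u ++ if b then u ++ v else v ++ u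

theorem twoLoopBlock_injective (huv : u ++ v ≠ v ++ u) : Injective (twoLoopBlock u v) := by
  intro b c hbc
  cases b <;> cases c <;> simp_all [twoLoopBlock, eq_comm]

theorem length_twoLoopBlock (u v : List Γ) (b : Bool) :
    (twoLoopBlock u v b).length = u.length + (u.length + v.length) := by
  cases b <;> simp [twoLoopBlock, Nat.add_comm]

theorem deltaStar_twoLoopBlock {Q : Type*} {δ : Q → Γ → Q} {q : Q}
    (hu : deltaStar δ q u = q) (hv : deltaStar δ q v = q) (b : Bool) :
    deltaStar δ q (twoLoopBlock u v b) = q := by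
  cases b <;> simp [twoLoopBlock, deltaStar_append, hu, hv]

end TwoLoops

theorem stmt_7 {Γ : Type*} [Fintype Γ] (L : Set (List Γ))
    {Q : Type*} (q0 : Q) (δ : Q → Γ → Q) (F : Set Q)
    (hL : L = {w | deltaStar δ q0 w ∈ F})
    (hcyc : ∃ q : Q,
      (∃ x : List Γ, deltaStar δ q0 x = q) ∧
      ∃ u v : List Γ, deltaStar δ q u = q ∧ deltaStar δ q v = q ∧ u ++ v ≠ v ++ u ∧
        (∃ u' : List Γ, u' <+: u ∧ deltaStar δ q u' ∈ F) ∧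
        (∃ v' : List Γ, v' <+: v ∧ deltaStar δ q v' ∈ F)) :
    ¬ (Linf L).Countable ∧ Exponential L := by
  obtain ⟨q, ⟨x, hx⟩, u, v, hu, hv, huv, ⟨u', hu'u, hu'F⟩, -⟩ := hcyc
  subst hL
  have hB := twoLoopBlock_injective huv
  have hm := length_twoLoopBlock u v
  have hloop := deltaStar_twoLoopBlock hu hv
  exact ⟨not_countable_Linf_of_loop_code hx hB hm hloop
      (fun _ => hu'u.trans (List.prefix_append _ _)) hu'F,
    exponential_of_loop_code hx hB hm hloop hu'F⟩
end
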